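/- arXiv:2508.11795 — 2 statements merged into one kernel-verified Lean document; each statement's English description precedes it below -/
import Mathlib

section
/- Let H : ℝ → 𝕊^p be a differentiable symmetric-matrix-valued function of time, and suppose there is a constant c > 0 such that H'(t) ⪰ -c H(t) for all t ≥ 0. If H(0) ⪰ 0, then H(t) ⪰ 0 for all t ≥ 0. -/
open Matrix

/-!
Each quadratic form `q x t = xᵀ H(t) x` satisfies the scalar inequality `q' + c q ≥ 0`,
so `t ↦ exp (c t) q t` is monotone on `[0, ∞)` and `q` keeps the sign of `q 0 ≥ 0`.
-/

theorem hasDerivAt_dotProduct_mulVec {𝕜 n : Type*} [NontriviallyNormedField 𝕜] [Fintype n]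
    {M : 𝕜 → Matrix n n 𝕜} {M' : Matrix n n 𝕜} {t : 𝕜}
    (hM : ∀ i j, HasDerivAt (fun s => M s i j) (M' i j) t) (x y : n → 𝕜) :
    HasDerivAt (fun s => x ⬝ᵥ (M s *ᵥ y)) (x ⬝ᵥ (M' *ᵥ y)) t := by
  simp only [dotProduct, mulVec]
  exact HasDerivAt.fun_sum fun i _ =>
    (HasDerivAt.fun_sum fun j _ => (hM i j).mul_const (y j)).const_mul (x i)

theorem monotoneOn_exp_mul_of_deriv_add_mul_nonneg {f f' : ℝ → ℝ} {c : ℝ}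
    (hf : ∀ t, HasDerivAt f (f' t) t) (hbarrier : ∀ t, 0 ≤ t → 0 ≤ f' t + c * f t) :
    MonotoneOn (fun t => Real.exp (c * t) * f t) (Set.Ici 0) := by
  have hg : ∀ t, HasDerivAt (fun t => Real.exp (c * t) * f t)
      (Real.exp (c * t) * (f' t + c * f t)) t := fun t => by
    have hexp : HasDerivAt (fun u => Real.exp (c * u)) (Real.exp (c * t) * c) t := by
      simpa using ((hasDerivAt_id t).const_mul c).exp
    exact (hexp.mul (hf t)).congr_deriv (by ring)
  refine monotoneOn_of_hasDerivWithinAt_nonneg (convex_Ici 0)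
    (fun t _ => (hg t).continuousAt.continuousWithinAt) (fun t _ => (hg t).hasDerivWithinAt)
    fun t ht => ?_
  rw [interior_Ici] at ht
  exact mul_nonneg (Real.exp_pos _).le (hbarrier t (le_of_lt ht))

theorem nonneg_of_deriv_add_mul_nonneg {f f' : ℝ → ℝ} {c : ℝ}
    (hf : ∀ t, HasDerivAt f (f' t) t) (hbarrier : ∀ t, 0 ≤ t → 0 ≤ f' t + c * f t)
    (h0 : 0 ≤ f 0) {t : ℝ} (ht : 0 ≤ t) : 0 ≤ f t := by
  have hmono := monotoneOn_exp_mul_of_deriv_add_mul_nonneg hf hbarrier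
    Set.self_mem_Ici ht ht
  simp only [mul_zero, Real.exp_zero, one_mul] at hmono
  exact nonneg_of_mul_nonneg_right (h0.trans hmono) (Real.exp_pos _)

theorem psd_forward_invariance_general {p : ℕ} (H H' : ℝ → Matrix (Fin p) (Fin p) ℝ)
    (hsymm : ∀ t, (H t).IsSymm)
    (hderiv : ∀ t, ∀ i j, HasDerivAt (fun s => H s i j) (H' t i j) t)
    (c : ℝ)
    (hbarrier : ∀ t, 0 ≤ t → (H' t + c • H t).PosSemidef)
    (h0 : (H 0).PosSemidef) :
    ∀ t, 0 ≤ t → (H t).PosSemidef := by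
  intro t ht
  refine .of_dotProduct_mulVec_nonneg (isHermitian_iff_isSymm.mpr (hsymm t)) fun x => ?_
  simp only [star_trivial]
  refine nonneg_of_deriv_add_mul_nonneg (f' := fun s => x ⬝ᵥ (H' s *ᵥ x)) (c := c)
    (fun s => hasDerivAt_dotProduct_mulVec (hderiv s) x x) (fun s hs => ?_) ?_ ht
  · simpa [add_mulVec, dotProduct_add, smul_mulVec, dotProduct_smul] using
      (hbarrier s hs).dotProduct_mulVec_nonneg x
  · simpa using h0.dotProduct_mulVec_nonneg x

/-- Forward invariance of the PSD cone under the exponential matrix barrier condition: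
if `H'(t) ⪰ -c H(t)` for all `t ≥ 0` and `H(0) ⪰ 0`, then `H(t) ⪰ 0` for all `t ≥ 0`. -/
theorem psd_forward_invariance {p : ℕ} (H H' : ℝ → Matrix (Fin p) (Fin p) ℝ)
    (hsymm : ∀ t, (H t).IsSymm)
    (hderiv : ∀ t, ∀ i j, HasDerivAt (fun s => H s i j) (H' t i j) t)
    (c : ℝ) (hc : 0 < c)
    (hbarrier : ∀ t, 0 ≤ t → (H' t + c • H t).PosSemidef)
    (h0 : (H 0).PosSemidef) :
    ∀ t, 0 ≤ t → (H t).PosSemidef :=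
  psd_forward_invariance_general H H' hsymm hderiv c hbarrier h0
end

section
/- For x ∈ ℝⁿ with ‖x − x₀‖² ≤ R² and c > 0, the matrix inequality [[0_{n×n}, w], [wᵀ, 0]] ⪰ -c [[I_n, x − x₀], [(x − x₀)ᵀ, R²]] (with w ∈ ℝⁿ) holds if and only if c R² − (1/c)‖w + c(x − x₀)‖² ≥ 0. -/
/-! With `v = w + c (x - x₀)` the matrix is the bordered matrix `[[c I, v], [vᵀ, c R²]]`. Its
leading block `c I` is positive definite, so by the Schur complement it is positive semidefinite
exactly when the `1 × 1` complement `c R² - vᵀ (c I)⁻¹ v = c R² - ‖v‖² / c` is nonnegative. -/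

open Matrix

namespace Matrix

theorem posSemidef_iff_of_unique {ι R : Type*} [Unique ι] [CommRing R] [PartialOrder R]
    [StarRing R] [StarOrderedRing R] (M : Matrix ι ι R) :
    M.PosSemidef ↔ 0 ≤ M default default := by
  have hM : M = diagonal fun _ => M default default := by
    ext i j
    simp [Subsingleton.elim i default, Subsingleton.elim j default]
  rw [hM, posSemidef_diagonal_iff]
  simp

theorem fromBlocks_add_smul_fromBlocks {m R : Type*} [DecidableEq m] [Semiring R]
    (w u : m → R) (c a : R) :
    fromBlocks 0 (replicateCol Unit w) (replicateRow Unit w) (of fun _ _ => 0)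
        + c • fromBlocks 1 (replicateCol Unit u) (replicateRow Unit u) (of fun _ _ => a) =
      fromBlocks (c • 1) (replicateCol Unit (w + c • u)) (replicateRow Unit (w + c • u))
        (of fun _ _ => c * a) := by
  rw [fromBlocks_smul, fromBlocks_add, replicateCol_add, replicateRow_add, replicateCol_smul,
    replicateRow_smul]
  congr 1
  · simp
  · ext; simp

theorem posSemidef_fromBlocks_smul_one_iff {m : Type*} [Fintype m] [DecidableEq m] {c : ℝ}
    (hc : 0 < c) (v : m → ℝ) (d : ℝ) :
    (fromBlocks (c • 1) (replicateCol Unit v) (replicateRow Unit v) (of fun _ _ => d)).PosSemidef ↔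
      0 ≤ d - c⁻¹ * (v ⬝ᵥ v) := by
  have hA : (c • 1 : Matrix m m ℝ).PosDef := PosDef.one.smul hc
  let _ : Invertible (c • 1 : Matrix m m ℝ) :=
    invertibleOfLeftInverse _ (c⁻¹ • 1) (by simp [smul_smul, hc.ne'])
  have hinv : (c • 1 : Matrix m m ℝ)⁻¹ = c⁻¹ • 1 :=
    inv_eq_left_inv (by simp [smul_smul, hc.ne'])
  have hB : (replicateCol Unit v)ᴴ = replicateRow Unit v := by
    rw [conjTranspose_replicateCol, star_trivial]
  rw [← hB, PosDef.fromBlocks₁₁ _ _ hA, posSemidef_iff_of_unique, hinv]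
  simp [replicateCol, Matrix.mul_apply, dotProduct, Finset.mul_sum, mul_comm]

end Matrix

theorem sphere_mcbf_condition_general {n : ℕ} (x x₀ w : Fin n → ℝ) (R c : ℝ) (hc : 0 < c) :
    ((Matrix.fromBlocks (0 : Matrix (Fin n) (Fin n) ℝ)
        (Matrix.of fun i (_ : Unit) => w i)
        (Matrix.of fun (_ : Unit) j => w j)
        (Matrix.of fun (_ : Unit) (_ : Unit) => (0 : ℝ)))
      + c • (Matrix.fromBlocks (1 : Matrix (Fin n) (Fin n) ℝ)
        (Matrix.of fun i (_ : Unit) => (x - x₀) i)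
        (Matrix.of fun (_ : Unit) j => (x - x₀) j)
        (Matrix.of fun (_ : Unit) (_ : Unit) => R ^ 2))).PosSemidef ↔
    0 ≤ c * R ^ 2 - (1 / c) * ((w + c • (x - x₀)) ⬝ᵥ (w + c • (x - x₀))) := by
  rw [one_div, ← posSemidef_fromBlocks_smul_one_iff hc]
  exact Iff.of_eq (congrArg PosSemidef (fromBlocks_add_smul_fromBlocks w (x - x₀) c (R ^ 2)))

/-- The exponential matrix CBF condition for the Schur-complement representation of a sphere:
`[[0, w], [wᵀ, 0]] ⪰ -c [[I, x - x₀], [(x - x₀)ᵀ, R²]]` iff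
`c R² - (1/c) ‖w + c (x - x₀)‖² ≥ 0`. -/
theorem sphere_mcbf_condition {n : ℕ} (x x₀ w : Fin n → ℝ) (R c : ℝ) (hc : 0 < c)
    (hx : (x - x₀) ⬝ᵥ (x - x₀) ≤ R ^ 2) :
    ((Matrix.fromBlocks (0 : Matrix (Fin n) (Fin n) ℝ)
        (Matrix.of fun i (_ : Unit) => w i)
        (Matrix.of fun (_ : Unit) j => w j)
        (Matrix.of fun (_ : Unit) (_ : Unit) => (0 : ℝ)))
      + c • (Matrix.fromBlocks (1 : Matrix (Fin n) (Fin n) ℝ)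
        (Matrix.of fun i (_ : Unit) => (x - x₀) i)
        (Matrix.of fun (_ : Unit) j => (x - x₀) j)
        (Matrix.of fun (_ : Unit) (_ : Unit) => R ^ 2))).PosSemidef ↔
    0 ≤ c * R ^ 2 - (1 / c) * ((w + c • (x - x₀)) ⬝ᵥ (w + c • (x - x₀))) :=
  sphere_mcbf_condition_general x x₀ w R c hc
end
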